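/- For each i ∈ {1,…,5}, the assignment σᵢ(qᵢ) = q_{i+1}, σᵢ(q_{i+1}) = q_{i+1}qᵢq_{i+1}, and σᵢ(qⱼ) = qⱼ for j ≠ i, i+1, defines a group automorphism σᵢ of Γ, and there exists a group automorphism φᵢ of Γ₂ such that ι ∘ φᵢ = σᵢ ∘ ι. Moreover, for any such φᵢ and any pentagon representation ρ : Γ₂ → PSL(2,ℂ), the composition ρ ∘ φᵢ is again a pentagon representation. -/

import Mathlib

/- Common setup: PSL(2,ℂ), its action on ℙ¹(ℂ), loxodromic/parabolic/elliptic elements,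
elementary subgroups, surface groups, the pentagon group Γ and the embedding ι. -/

noncomputable section

open Matrix

/-- `SL(2,ℂ)`. -/
abbrev SL2C : Type := Matrix.SpecialLinearGroup (Fin 2) ℂ

instance : TopologicalSpace SL2C := instTopologicalSpaceSubtype

/-- `PSL(2,ℂ)`, the quotient of `SL(2,ℂ)` by its center `{±I}`. -/
abbrev PSL2C : Type := SL2C ⧸ Subgroup.center SL2C

/-- The quotient map `SL(2,ℂ) → PSL(2,ℂ)`. -/
def projPSL : SL2C →* PSL2C := QuotientGroup.mk' (Subgroup.center SL2C)

/-- The complex projective line `ℙ¹(ℂ)`. -/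
abbrev P1 : Type := Projectivization ℂ (Fin 2 → ℂ)

/-- The square of the trace, well defined on `PSL(2,ℂ)`. -/
def trSq (g : PSL2C) : ℂ :=
  (Matrix.trace ((Quotient.out g : SL2C) : Matrix (Fin 2) (Fin 2) ℂ)) ^ 2

/-- `g` is loxodromic iff `tr² g` is not a real number in `[0,4]`. -/
def IsLoxodromic (g : PSL2C) : Prop := ¬ ∃ r : ℝ, 0 ≤ r ∧ r ≤ 4 ∧ trSq g = (r : ℂ)

/-- `g` is parabolic iff `g ≠ 1` and `tr² g = 4`. -/
def IsParabolic (g : PSL2C) : Prop := g ≠ 1 ∧ trSq g = 4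

/-- `g` is elliptic iff `g ≠ 1` and `tr² g` is a real number in `[0,4)`. -/
def IsElliptic (g : PSL2C) : Prop := g ≠ 1 ∧ ∃ r : ℝ, 0 ≤ r ∧ r < 4 ∧ trSq g = (r : ℂ)

lemma sl2_toLin'_injective (g : SL2C) :
    Function.Injective (Matrix.toLin' (g : Matrix (Fin 2) (Fin 2) ℂ)) := by
  intro v w h
  have h2 : Matrix.toLin' ((g⁻¹ : SL2C) : Matrix (Fin 2) (Fin 2) ℂ)
      (Matrix.toLin' ((g : SL2C) : Matrix (Fin 2) (Fin 2) ℂ) v) =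
      Matrix.toLin' ((g⁻¹ : SL2C) : Matrix (Fin 2) (Fin 2) ℂ)
      (Matrix.toLin' ((g : SL2C) : Matrix (Fin 2) (Fin 2) ℂ) w) := by rw [h]
  rwa [← Matrix.toLin'_mul_apply, ← Matrix.toLin'_mul_apply,
    ← Matrix.SpecialLinearGroup.coe_mul, inv_mul_cancel,
    Matrix.SpecialLinearGroup.coe_one, Matrix.toLin'_one, LinearMap.id_apply,
    LinearMap.id_apply] at h2

/-- The action of `PSL(2,ℂ)` on `ℙ¹(ℂ)` by Möbius transformations (independent of the
choice of representative, since the center acts trivially on lines). -/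
def pslAct (g : PSL2C) (x : P1) : P1 :=
  Projectivization.map (Matrix.toLin' ((Quotient.out g : SL2C) : Matrix (Fin 2) (Fin 2) ℂ))
    (sl2_toLin'_injective _) x

/-- A subgroup of `PSL(2,ℂ)` is elementary if it has a nonempty invariant subset of `ℙ¹(ℂ)`
with at most two elements, or its closure is compact. -/
def IsElementarySubgroup (G : Subgroup PSL2C) : Prop :=
  (∃ S : Set P1, S.Nonempty ∧ S.Finite ∧ S.ncard ≤ 2 ∧ ∀ g ∈ G, pslAct g '' S = S) ∨
    IsCompact (closure (G : Set PSL2C))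

/-- A homomorphism to `PSL(2,ℂ)` is non-elementary if its image is non-elementary. -/
def IsNonElem {H : Type*} [Group H] (ρ : H →* PSL2C) : Prop :=
  ¬ IsElementarySubgroup ρ.range

/-- `g` sends a fixed point of `h` to the other one. -/
def SendsFixedToOther (g h : PSL2C) : Prop :=
  ∃ p q : P1, p ≠ q ∧ pslAct h p = p ∧ pslAct h q = q ∧ (pslAct g p = q ∨ pslAct g q = p)

/-- `g` interchanges the two fixed points of `h`. -/
def InterchangesFixed (g h : PSL2C) : Prop :=
  ∃ p q : P1, p ≠ q ∧ pslAct h p = p ∧ pslAct h q = q ∧ pslAct g p = q ∧ pslAct g q = p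

/-- `PSL(2,ℝ)` as a subgroup of `PSL(2,ℂ)`: the image of `SL(2,ℝ)`. -/
def PSL2R : Subgroup PSL2C :=
  (projPSL.comp (Matrix.SpecialLinearGroup.map (n := Fin 2) Complex.ofRealHom)).range

/-- `γ₁, γ₂` generate a rank-two Schottky group: the induced map from the free group `F₂` is
injective, with discrete image, all of whose nontrivial elements are loxodromic. -/
def GeneratesSchottky (γ₁ γ₂ : PSL2C) : Prop :=
  Function.Injective (FreeGroup.lift ![γ₁, γ₂] : FreeGroup (Fin 2) →* PSL2C) ∧
    DiscreteTopology ((FreeGroup.lift ![γ₁, γ₂] : FreeGroup (Fin 2) →* PSL2C).range) ∧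
    ∀ g ∈ (FreeGroup.lift ![γ₁, γ₂] : FreeGroup (Fin 2) →* PSL2C).range, g ≠ 1 → IsLoxodromic g

/-- The commutator `[x,y] = y⁻¹x⁻¹yx` in a free group. -/
def commF {α : Type*} (x y : FreeGroup α) : FreeGroup α := y⁻¹ * x⁻¹ * y * x

/-- The surface relator `[a_g,b_g]⋯[a₁,b₁]`. -/
def surfaceRel (g : ℕ) : FreeGroup (Fin g × Bool) :=
  (((List.finRange g).reverse).map
    (fun i => commF (FreeGroup.of (i, false)) (FreeGroup.of (i, true)))).prod

/-- The genus-`g` surface group `Γ_g`. -/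
abbrev SurfaceGroup (g : ℕ) : Type :=
  PresentedGroup ({surfaceRel g} : Set (FreeGroup (Fin g × Bool)))

/-- The generator `a_{i+1}` of `Γ_g`. -/
def sgA (g : ℕ) (i : Fin g) : SurfaceGroup g := PresentedGroup.of (i, false)

/-- The generator `b_{i+1}` of `Γ_g`. -/
def sgB (g : ℕ) (i : Fin g) : SurfaceGroup g := PresentedGroup.of (i, true)

/-- The genus-2 surface group `Γ₂`. -/
abbrev Gamma2 : Type := SurfaceGroup 2
def a1 : Gamma2 := sgA 2 0
def b1 : Gamma2 := sgB 2 0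
def a2 : Gamma2 := sgA 2 1
def b2 : Gamma2 := sgB 2 1

/-- Relations for the group `Γ = ⟨q₁,…,q₆ ∣ qᵢ² = 1, q₁q₂q₃q₄q₅q₆ = 1⟩`. -/
def pentagonRels : Set (FreeGroup (Fin 6)) :=
  (Set.range fun i : Fin 6 => FreeGroup.of i * FreeGroup.of i) ∪
    {((List.finRange 6).map FreeGroup.of).prod}

/-- The group `Γ = ⟨q₁,…,q₆ ∣ qᵢ² = 1, q₁q₂q₃q₄q₅q₆ = 1⟩`. -/
abbrev GammaP : Type := PresentedGroup pentagonRels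

/-- The generator `q_{i+1}` of `Γ`. -/
def qgen (i : Fin 6) : GammaP := PresentedGroup.of i

lemma qgen_mul_self (i : Fin 6) : qgen i * qgen i = 1 := by
  have hmem : FreeGroup.of i * FreeGroup.of i ∈ pentagonRels :=
    Set.mem_union_left _ ⟨i, rfl⟩
  have h : (PresentedGroup.mk pentagonRels (FreeGroup.of i * FreeGroup.of i)) = 1 :=
    (QuotientGroup.eq_one_iff _).mpr (Subgroup.subset_normalClosure hmem)
  rw [_root_.map_mul] at h
  exact h

lemma qgen_prod : qgen 0 * (qgen 1 * (qgen 2 * (qgen 3 * (qgen 4 * qgen 5)))) = 1 := by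
  have hmem : ((List.finRange 6).map FreeGroup.of).prod ∈ pentagonRels :=
    Set.mem_union_right _ rfl
  have h : (PresentedGroup.mk pentagonRels (((List.finRange 6).map FreeGroup.of).prod)) = 1 :=
    (QuotientGroup.eq_one_iff _).mpr (Subgroup.subset_normalClosure hmem)
  have h6 : List.finRange 6 = [0, 1, 2, 3, 4, 5] := by decide
  rw [h6] at h
  simp only [List.map_cons, List.map_nil, List.prod_cons, List.prod_nil, mul_one,
    _root_.map_mul] at h
  exact h

lemma pent_helper {G : Type*} [Group G] (x : Fin 6 → G) (hx : ∀ i, x i * x i = 1)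
    (hp : x 0 * (x 1 * (x 2 * (x 3 * (x 4 * x 5)))) = 1) :
    (x 4 * x 5)⁻¹ * (x 4 * x 3)⁻¹ * (x 4 * x 5) * (x 4 * x 3) *
      ((x 1 * x 2)⁻¹ * (x 1 * x 0)⁻¹ * (x 1 * x 2) * (x 1 * x 0)) = 1 := by
  have hinv : ∀ i, (x i)⁻¹ = x i := fun i => inv_eq_of_mul_eq_one_right (hx i)
  have hrev : x 5 * (x 4 * (x 3 * (x 2 * (x 1 * x 0)))) = 1 := by
    have h := congrArg (·⁻¹) hp
    simpa [_root_.mul_inv_rev, hinv, mul_assoc] using h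
  have key : ∀ (i : Fin 6) (t : G), x i * (x i * t) = t := fun i t => by
    rw [← mul_assoc, hx, one_mul]
  have key2 : ∀ t : G, x 5 * (x 4 * (x 3 * (x 2 * (x 1 * (x 0 * t))))) = t := fun t => by
    calc x 5 * (x 4 * (x 3 * (x 2 * (x 1 * (x 0 * t)))))
        = (x 5 * (x 4 * (x 3 * (x 2 * (x 1 * x 0))))) * t := by simp [mul_assoc]
      _ = t := by rw [hrev, one_mul]
  simp only [_root_.mul_inv_rev, hinv, mul_assoc]
  simp only [key, key2]
  exact hrev

/-- The images of the generators `a₁, b₁, a₂, b₂` under `ι`. -/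
def pentMap : Fin 2 × Bool → GammaP
  | (0, false) => qgen 1 * qgen 0
  | (0, true) => qgen 1 * qgen 2
  | (1, false) => qgen 4 * qgen 3
  | (1, true) => qgen 4 * qgen 5

lemma surfaceRel_two :
    surfaceRel 2 = commF (FreeGroup.of ((1 : Fin 2), false)) (FreeGroup.of ((1 : Fin 2), true)) *
      commF (FreeGroup.of ((0 : Fin 2), false)) (FreeGroup.of ((0 : Fin 2), true)) := by
  have h : List.finRange 2 = [0, 1] := by decide
  simp [surfaceRel, h]

/-- The embedding `ι : Γ₂ → Γ`, `a₁ ↦ q₂q₁`, `b₁ ↦ q₂q₃`, `a₂ ↦ q₅q₄`, `b₂ ↦ q₅q₆`. -/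
def iota : Gamma2 →* GammaP :=
  PresentedGroup.toGroup (f := pentMap) (by
    intro r hr
    rw [Set.mem_singleton_iff] at hr
    subst hr
    rw [surfaceRel_two]
    simp only [commF, _root_.map_mul, _root_.map_inv, FreeGroup.lift_apply_of]
    have h01 : pentMap ((0 : Fin 2), false) = qgen 1 * qgen 0 := rfl
    have h02 : pentMap ((0 : Fin 2), true) = qgen 1 * qgen 2 := rfl
    have h11 : pentMap ((1 : Fin 2), false) = qgen 4 * qgen 3 := rfl
    have h12 : pentMap ((1 : Fin 2), true) = qgen 4 * qgen 5 := rfl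
    rw [h01, h02, h11, h12]
    exact pent_helper (fun i => qgen i) qgen_mul_self qgen_prod)

/-- A pentagon representation: a non-elementary `ρ : Γ₂ → PSL(2,ℂ)` extending to `Γ` with
exactly one `qᵢ` killed. -/
def IsPentagonRep (ρ : Gamma2 →* PSL2C) : Prop :=
  IsNonElem ρ ∧ ∃ ρ' : GammaP →* PSL2C, ρ'.comp iota = ρ ∧ ∃! i : Fin 6, ρ' (qgen i) = 1

/-- A primitive element of the free group `F₂`: part of a free basis. -/
def IsPrimitiveF2 (γ : FreeGroup (Fin 2)) : Prop :=
  ∃ φ : MulAut (FreeGroup (Fin 2)), φ (FreeGroup.of 0) = γ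

/-- `pp` and `pm` are the attracting resp. repelling fixed points of `α`: for a representative
`A ∈ SL(2,ℂ)` with eigenvalues `l, l⁻¹`, `|l| > 1`, they are the corresponding eigenlines. -/
def IsAttrRep (α : PSL2C) (pp pm : P1) : Prop :=
  ∃ A : SL2C, projPSL A = α ∧ ∃ l : ℂ, 1 < ‖l‖ ∧
    ∃ (v w : Fin 2 → ℂ) (hv : v ≠ 0) (hw : w ≠ 0),
      (A : Matrix (Fin 2) (Fin 2) ℂ) *ᵥ v = l • v ∧
      (A : Matrix (Fin 2) (Fin 2) ℂ) *ᵥ w = l⁻¹ • w ∧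
      pp = Projectivization.mk ℂ v hv ∧ pm = Projectivization.mk ℂ w hw

/-!
`σᵢ` is the Hurwitz move `(qᵢ, qᵢ₊₁) ↦ (qᵢ₊₁, qᵢ₊₁⁻¹ qᵢ qᵢ₊₁)` on the generating tuple of `Γ`
(for involutions `qᵢ₊₁⁻¹ = qᵢ₊₁`). A Hurwitz move keeps the product of the tuple and replaces
every entry by a conjugate of an entry, so it respects the relations of `Γ`, and the inverse move
gives its inverse. The subgroup `ι(Γ₂)` is `σᵢ`-invariant, and on it `σᵢ` is given by an explicit
Dehn-twist-like automorphism `φᵢ` of `Γ₂`.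

If `ρ = ρ' ∘ ι`, then `ρ ∘ φ = (ρ' ∘ σᵢ) ∘ ι` has the same image as `ρ`. Since `σᵢ(qⱼ)` is
conjugate to `q_{τ j}` for the transposition `τ = (i i+1)`, the representation `ρ' ∘ σᵢ` kills
exactly as many generators as `ρ'`.
-/

namespace Hurwitz

variable {G : Type*} [Group G] {n : ℕ}

def move (x : Fin (n + 1) → G) (i : Fin n) : Fin (n + 1) → G := fun j =>
  if j = i.castSucc then x i.succ
  else if j = i.succ then (x i.succ)⁻¹ * x i.castSucc * x i.succ
  else x j

def moveInv (x : Fin (n + 1) → G) (i : Fin n) : Fin (n + 1) → G := fun j =>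
  if j = i.castSucc then x i.castSucc * x i.succ * (x i.castSucc)⁻¹
  else if j = i.succ then x i.castSucc
  else x j

variable (x : Fin (n + 1) → G) (i : Fin n)

@[simp] lemma move_castSucc : move x i i.castSucc = x i.succ := by
  simp [move]

@[simp] lemma move_succ : move x i i.succ = (x i.succ)⁻¹ * x i.castSucc * x i.succ := by
  simp [move, Fin.castSucc_lt_succ.ne']

lemma move_of_ne {j : Fin (n + 1)} (h₁ : j ≠ i.castSucc) (h₂ : j ≠ i.succ) :
    move x i j = x j := by
  simp [move, h₁, h₂]

lemma moveInv_move : moveInv (move x i) i = x := by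
  funext j
  simp only [move, moveInv]
  split_ifs <;> simp_all [Fin.castSucc_lt_succ.ne', mul_assoc]

lemma move_moveInv : move (moveInv x i) i = x := by
  funext j
  simp only [move, moveInv]
  split_ifs <;> simp_all [Fin.castSucc_lt_succ.ne', mul_assoc]

lemma comp_move {H : Type*} [Group H] (f : G →* H) : f ∘ move x i = move (f ∘ x) i := by
  funext j
  simp only [Function.comp_apply, move]
  split_ifs <;> simp

lemma comp_moveInv {H : Type*} [Group H] (f : G →* H) :
    f ∘ moveInv x i = moveInv (f ∘ x) i := by
  funext j
  simp only [Function.comp_apply, moveInv]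
  split_ifs <;> simp

lemma isConj_move (j : Fin (n + 1)) :
    IsConj (x (Equiv.swap i.castSucc i.succ j)) (move x i j) := by
  by_cases h₁ : j = i.castSucc
  · rw [h₁, Equiv.swap_apply_left, move_castSucc]
  by_cases h₂ : j = i.succ
  · rw [h₂, Equiv.swap_apply_right, move_succ, isConj_iff]
    exact ⟨(x i.succ)⁻¹, by group⟩
  rw [move_of_ne _ _ h₁ h₂, Equiv.swap_apply_of_ne_of_ne h₁ h₂]

lemma isConj_moveInv (j : Fin (n + 1)) :
    IsConj (x (Equiv.swap i.castSucc i.succ j)) (moveInv x i j) := by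
  have h := isConj_move (moveInv x i) i (Equiv.swap i.castSucc i.succ j)
  rw [move_moveInv, Equiv.swap_apply_self] at h
  exact h.symm

lemma prod_ofFn_move : ∀ {n : ℕ} (x : Fin (n + 1) → G) (i : Fin n),
    (List.ofFn (move x i)).prod = (List.ofFn x).prod
  | 0, _, i => i.elim0
  | n + 1, x, i => by
    induction i using Fin.cases with
    | zero =>
      have tail (j : Fin n) : move x 0 j.succ.succ = x j.succ.succ :=
        move_of_ne _ _ (Fin.succ_ne_zero _) (Fin.succ_succ_ne_one _)
      simp only [List.ofFn_succ, List.prod_cons, tail]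
      rw [show move x 0 0 = x (Fin.succ 0) from move_castSucc x 0, move_succ, Fin.castSucc_zero]
      group
    | succ k =>
      have head : move x k.succ 0 = x 0 :=
        move_of_ne _ _ (by simp [Fin.ext_iff]) (by simp [Fin.ext_iff])
      have tail : (fun j : Fin (n + 1) => move x k.succ j.succ) = move (fun j => x j.succ) k := by
        funext j
        simp only [move, Fin.castSucc_succ, Fin.succ_inj]
      rw [List.ofFn_succ, List.ofFn_succ (n := n + 1), List.prod_cons, List.prod_cons, head, tail,
        prod_ofFn_move]

lemma prod_ofFn_moveInv : (List.ofFn (moveInv x i)).prod = (List.ofFn x).prod := by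
  conv_rhs => rw [← move_moveInv x i]
  exact (prod_ofFn_move _ i).symm

end Hurwitz

lemma IsConj.mul_self_eq_one {G : Type*} [Group G] {a b : G} (h : IsConj a b) (ha : a * a = 1) :
    b * b = 1 := by
  obtain ⟨c, rfl⟩ := isConj_iff.mp h
  rw [show c * a * c⁻¹ * (c * a * c⁻¹) = c * (a * a) * c⁻¹ by group, ha, mul_one,
    mul_inv_cancel]

lemma qgen_inv (j : Fin 6) : (qgen j)⁻¹ = qgen j :=
  inv_eq_of_mul_eq_one_right (qgen_mul_self j)

@[simp] lemma qgen_mul_qgen_mul (j : Fin 6) (g : GammaP) : qgen j * (qgen j * g) = g := by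
  rw [← mul_assoc, qgen_mul_self, one_mul]

lemma qgen_three : qgen 3 = qgen 2 * (qgen 1 * (qgen 0 * (qgen 5 * qgen 4))) :=
  calc qgen 3 = qgen 2 * (qgen 1 * (qgen 0 *
        ((qgen 0 * (qgen 1 * (qgen 2 * (qgen 3 * (qgen 4 * qgen 5))))) * (qgen 5 * qgen 4)))) := by
        simp [mul_assoc, qgen_mul_self]
    _ = _ := by rw [qgen_prod, one_mul]

namespace GammaP

variable {G : Type*} [Group G]

lemma lift_pentagonRels (x : Fin 6 → G) (hsq : ∀ j, x j * x j = 1)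
    (hprod : (List.ofFn x).prod = 1) : ∀ r ∈ pentagonRels, FreeGroup.lift x r = 1 := by
  rintro r (⟨j, rfl⟩ | rfl)
  · simpa using hsq j
  · rw [map_list_prod, List.map_map,
      show ⇑(FreeGroup.lift x) ∘ FreeGroup.of = x from funext fun j => FreeGroup.lift_apply_of,
      ← List.ofFn_eq_map]
    exact hprod

def lift (x : Fin 6 → G) (hsq : ∀ j, x j * x j = 1) (hprod : (List.ofFn x).prod = 1) :
    GammaP →* G :=
  PresentedGroup.toGroup (lift_pentagonRels x hsq hprod)

@[simp] lemma lift_qgen (x : Fin 6 → G) (hsq) (hprod) (j : Fin 6) :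
    lift x hsq hprod (qgen j) = x j :=
  PresentedGroup.toGroup.of _

lemma lift_comp_qgen (x : Fin 6 → G) (hsq) (hprod) : ⇑(lift x hsq hprod) ∘ qgen = x :=
  funext (lift_qgen x hsq hprod)

lemma hom_ext {f g : GammaP →* G} (h : ∀ j, f (qgen j) = g (qgen j)) : f = g :=
  PresentedGroup.ext h

lemma prod_ofFn_qgen : (List.ofFn qgen).prod = 1 := by
  simpa [List.ofFn_succ, mul_assoc] using qgen_prod

end GammaP

section Braid

variable (i : Fin 5)

def braidMove : GammaP →* GammaP :=
  GammaP.lift (Hurwitz.move qgen i)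
    (fun j => (Hurwitz.isConj_move qgen i j).mul_self_eq_one (qgen_mul_self _))
    (by rw [Hurwitz.prod_ofFn_move, GammaP.prod_ofFn_qgen])

def braidMoveInv : GammaP →* GammaP :=
  GammaP.lift (Hurwitz.moveInv qgen i)
    (fun j => (Hurwitz.isConj_moveInv qgen i j).mul_self_eq_one (qgen_mul_self _))
    (by rw [Hurwitz.prod_ofFn_moveInv, GammaP.prod_ofFn_qgen])

lemma braidMoveInv_comp_braidMove : (braidMoveInv i).comp (braidMove i) = MonoidHom.id _ := by
  have h : ⇑(braidMoveInv i) ∘ Hurwitz.move qgen i = qgen := by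
    rw [Hurwitz.comp_move, braidMoveInv, GammaP.lift_comp_qgen, Hurwitz.move_moveInv]
  exact GammaP.hom_ext fun j => by simpa [braidMove] using congrFun h j

lemma braidMove_comp_braidMoveInv : (braidMove i).comp (braidMoveInv i) = MonoidHom.id _ := by
  have h : ⇑(braidMove i) ∘ Hurwitz.moveInv qgen i = qgen := by
    rw [Hurwitz.comp_moveInv, braidMove, GammaP.lift_comp_qgen, Hurwitz.moveInv_move]
  exact GammaP.hom_ext fun j => by simpa [braidMoveInv] using congrFun h j

def braidAut : MulAut GammaP :=
  (braidMove i).toMulEquiv (braidMoveInv i) (braidMoveInv_comp_braidMove i)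
    (braidMove_comp_braidMoveInv i)

@[simp] lemma braidAut_qgen (j : Fin 6) : braidAut i (qgen j) = Hurwitz.move qgen i j := by
  simp [braidAut, braidMove]

lemma isConj_braidAut_qgen (j : Fin 6) :
    IsConj (qgen (Equiv.swap i.castSucc i.succ j)) (braidAut i (qgen j)) := by
  rw [braidAut_qgen]
  exact Hurwitz.isConj_move qgen i j

end Braid

lemma IsPentagonRep.comp_of_isConj {σ : MulAut GammaP} (π : Equiv.Perm (Fin 6))
    (hσ : ∀ j, IsConj (qgen (π j)) (σ (qgen j))) {φ : MulAut Gamma2}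
    (hφ : iota.comp φ.toMonoidHom = σ.toMonoidHom.comp iota) {ρ : Gamma2 →* PSL2C}
    (hρ : IsPentagonRep ρ) : IsPentagonRep (ρ.comp φ.toMonoidHom) := by
  obtain ⟨hne, ρ', rfl, hkill⟩ := hρ
  refine ⟨?_, ρ'.comp σ.toMonoidHom, ?_, ?_⟩
  · rw [IsNonElem, MonoidHom.range_comp, (φ.toMonoidHom).range_eq_top_of_surjective φ.surjective,
      ← MonoidHom.range_eq_map]
    exact hne
  · rw [MonoidHom.comp_assoc, ← hφ, MonoidHom.comp_assoc]
  · refine (π.existsUnique_congr fun j => ?_).mpr hkill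
    rw [← isConj_one_left, ← isConj_one_left]
    exact ⟨(ρ'.map_isConj (hσ j)).trans, (ρ'.map_isConj (hσ j)).symm.trans⟩

namespace Gamma2

variable {G : Type*} [Group G]

def relator (A B C D : G) : G := (D⁻¹ * C⁻¹ * D * C) * (B⁻¹ * A⁻¹ * B * A)

def genImages (A B C D : G) : Fin 2 × Bool → G
  | (0, false) => A
  | (0, true) => B
  | (1, false) => C
  | (1, true) => D

lemma lift_surfaceRel (A B C D : G) :
    FreeGroup.lift (genImages A B C D) (surfaceRel 2) = relator A B C D := by
  simp [surfaceRel_two, commF, relator, genImages]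

lemma relator_gens : relator a1 b1 a2 b2 = 1 := by
  have h := PresentedGroup.one_of_mem (Set.mem_singleton (surfaceRel 2))
  rw [surfaceRel_two] at h
  exact h

def lift (A B C D : G) (h : relator A B C D = 1) : Gamma2 →* G :=
  PresentedGroup.toGroup (f := genImages A B C D) fun r hr => by
    rw [Set.mem_singleton_iff.mp hr, lift_surfaceRel, h]

@[simp] lemma lift_a1 (A B C D : G) (h) : lift A B C D h a1 = A := PresentedGroup.toGroup.of _
@[simp] lemma lift_b1 (A B C D : G) (h) : lift A B C D h b1 = B := PresentedGroup.toGroup.of _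
@[simp] lemma lift_a2 (A B C D : G) (h) : lift A B C D h a2 = C := PresentedGroup.toGroup.of _
@[simp] lemma lift_b2 (A B C D : G) (h) : lift A B C D h b2 = D := PresentedGroup.toGroup.of _

lemma hom_ext {f g : Gamma2 →* G} (h₁ : f a1 = g a1) (h₂ : f b1 = g b1) (h₃ : f a2 = g a2)
    (h₄ : f b2 = g b2) : f = g := by
  refine PresentedGroup.ext fun ⟨k, e⟩ => ?_
  fin_cases k <;> cases e
  exacts [h₁, h₂, h₃, h₄]

lemma relator_eq_one_of_eq_conj {A B C D : Gamma2} (c : Gamma2)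
    (h : relator A B C D = c * relator a1 b1 a2 b2 * c⁻¹) : relator A B C D = 1 := by
  rw [h, relator_gens, mul_one, mul_inv_cancel]

end Gamma2

open Gamma2 in
def surfaceBraidAut : Fin 5 → MulAut Gamma2
  | 0 => MonoidHom.toMulEquiv
      (lift a1 (a1 * b1) a2 b2 (relator_eq_one_of_eq_conj 1 (by unfold relator; group)))
      (lift a1 (a1⁻¹ * b1) a2 b2 (relator_eq_one_of_eq_conj 1 (by unfold relator; group)))
      (by apply hom_ext <;> simp) (by apply hom_ext <;> simp)
  | 1 => MonoidHom.toMulEquiv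
      (lift (b1⁻¹ * a1) b1 a2 b2 (relator_eq_one_of_eq_conj 1 (by unfold relator; group)))
      (lift (b1 * a1) b1 a2 b2 (relator_eq_one_of_eq_conj 1 (by unfold relator; group)))
      (by apply hom_ext <;> simp) (by apply hom_ext <;> simp)
  | 2 => MonoidHom.toMulEquiv
      (lift a1 (b1 * a1 * b2⁻¹) (a2 * a1 * b2⁻¹) b2
        (relator_eq_one_of_eq_conj (a1⁻¹ * b2) (by unfold relator; group)))
      (lift a1 (b1 * b2 * a1⁻¹) (a2 * b2 * a1⁻¹) b2
        (relator_eq_one_of_eq_conj (b2⁻¹ * a1) (by unfold relator; group)))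
      (by apply hom_ext <;> simp) (by apply hom_ext <;> simp)
  | 3 => MonoidHom.toMulEquiv
      (lift a1 b1 a2 (a2 * b2) (relator_eq_one_of_eq_conj 1 (by unfold relator; group)))
      (lift a1 b1 a2 (a2⁻¹ * b2) (relator_eq_one_of_eq_conj 1 (by unfold relator; group)))
      (by apply hom_ext <;> simp) (by apply hom_ext <;> simp)
  | 4 => MonoidHom.toMulEquiv
      (lift a1 b1 (b2⁻¹ * a2) b2 (relator_eq_one_of_eq_conj 1 (by unfold relator; group)))
      (lift a1 b1 (b2 * a2) b2 (relator_eq_one_of_eq_conj 1 (by unfold relator; group)))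
      (by apply hom_ext <;> simp) (by apply hom_ext <;> simp)

@[simp] lemma iota_a1 : iota a1 = qgen 1 * qgen 0 := PresentedGroup.toGroup.of _
@[simp] lemma iota_b1 : iota b1 = qgen 1 * qgen 2 := PresentedGroup.toGroup.of _
@[simp] lemma iota_a2 : iota a2 = qgen 4 * qgen 3 := PresentedGroup.toGroup.of _
@[simp] lemma iota_b2 : iota b2 = qgen 4 * qgen 5 := PresentedGroup.toGroup.of _

lemma iota_comp_surfaceBraidAut (i : Fin 5) :
    iota.comp (surfaceBraidAut i).toMonoidHom = (braidAut i).toMonoidHom.comp iota := by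
  fin_cases i <;> apply Gamma2.hom_ext <;>
    simp [surfaceBraidAut, Hurwitz.move, qgen_inv, mul_assoc, qgen_mul_self]
  -- `φ₂` mixes the two handles, and only its check uses the product relation of `Γ`.
  all_goals simp [qgen_three]

/-- the automorphisms `σᵢ` of `Γ` exist, lift to automorphisms `φᵢ` of `Γ₂` along
`ι`, and precomposition by any such `φᵢ` preserves pentagon representations. -/
theorem statement7 (i : Fin 5) :
    ∃ σ : MulAut GammaP,
      (σ (qgen i.castSucc) = qgen i.succ ∧
        σ (qgen i.succ) = qgen i.succ * qgen i.castSucc * qgen i.succ ∧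
        ∀ j : Fin 6, j ≠ i.castSucc → j ≠ i.succ → σ (qgen j) = qgen j) ∧
      (∃ φ : MulAut Gamma2, iota.comp φ.toMonoidHom = σ.toMonoidHom.comp iota) ∧
      (∀ φ : MulAut Gamma2, iota.comp φ.toMonoidHom = σ.toMonoidHom.comp iota →
        ∀ ρ : Gamma2 →* PSL2C, IsPentagonRep ρ → IsPentagonRep (ρ.comp φ.toMonoidHom)) := by
  refine ⟨braidAut i, ⟨by simp, by simp [qgen_inv], fun j h₁ h₂ => ?_⟩,
    ⟨surfaceBraidAut i, iota_comp_surfaceBraidAut i⟩,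
    fun φ hφ ρ hρ => hρ.comp_of_isConj _ (isConj_braidAut_qgen i) hφ⟩
  rw [braidAut_qgen, Hurwitz.move_of_ne _ _ h₁ h₂]
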